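/- Let H : ℝ² → ℝ be differentiable and let (x,y,t) : ℝ → ℝ³ be a differentiable curve satisfying x' = (x²+y²)·∂H/∂y + 2y·H, y' = −( (x²+y²)·∂H/∂x + 2x·H ), and t' = t·( 2x·∂H/∂y − 2y·∂H/∂x ), with H and its partial derivatives evaluated at (x(s),y(s)). Then the function s ↦ t(s)·H(x(s),y(s)) is constant. -/

import Mathlib

/-- Conservation of the lifted homogeneous Hamiltonian `Ĥ = t·H` along the
Poissonization of the 2D Jacobi Hamiltonian flow: `s ↦ t(s)·H(x(s),y(s))`
is constant. -/
theorem stmt_9 (H : ℝ × ℝ → ℝ) (hH : Differentiable ℝ H)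
    (x y t : ℝ → ℝ)
    (hx : Differentiable ℝ x) (hy : Differentiable ℝ y) (ht : Differentiable ℝ t)
    (hx' : ∀ s, deriv x s
      = (x s ^ 2 + y s ^ 2) * deriv (fun b => H (x s, b)) (y s)
        + 2 * y s * H (x s, y s))
    (hy' : ∀ s, deriv y s
      = -((x s ^ 2 + y s ^ 2) * deriv (fun a => H (a, y s)) (x s)
        + 2 * x s * H (x s, y s)))
    (ht' : ∀ s, deriv t s
      = t s * (2 * x s * deriv (fun b => H (x s, b)) (y s)
        - 2 * y s * deriv (fun a => H (a, y s)) (x s))) :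
    ∀ s₁ s₂ : ℝ, t s₁ * H (x s₁, y s₁) = t s₂ * H (x s₂, y s₂) := by
  intro s₁ s₂
  have key : ∀ s : ℝ, HasDerivAt (fun s => t s * H (x s, y s)) 0 s := by
    intro s
    set p : ℝ × ℝ := (x s, y s) with hp
    set Hx : ℝ := deriv (fun a => H (a, y s)) (x s) with hHx
    set Hy : ℝ := deriv (fun b => H (x s, b)) (y s) with hHy
    have hfd : HasFDerivAt H (fderiv ℝ H p) p := (hH p).hasFDerivAt
    -- partial derivatives in terms of fderiv
    have hXp : HasDerivAt (fun a => H (a, y s)) (fderiv ℝ H p (1, 0)) (x s) := by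
      have : HasDerivAt (fun a : ℝ => (a, y s)) ((1 : ℝ), (0 : ℝ)) (x s) :=
        HasDerivAt.prodMk (hasDerivAt_id (x s)) (hasDerivAt_const (x s) (y s))
      exact hfd.comp_hasDerivAt (x s) this
    have hYp : HasDerivAt (fun b => H (x s, b)) (fderiv ℝ H p (0, 1)) (y s) := by
      have : HasDerivAt (fun b : ℝ => (x s, b)) ((0 : ℝ), (1 : ℝ)) (y s) :=
        HasDerivAt.prodMk (hasDerivAt_const (y s) (x s)) (hasDerivAt_id (y s))
      exact hfd.comp_hasDerivAt (y s) this
    have hHx' : Hx = fderiv ℝ H p (1, 0) := hXp.deriv ▸ rfl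
    have hHy' : Hy = fderiv ℝ H p (0, 1) := hYp.deriv ▸ rfl
    have hxs : HasDerivAt x (deriv x s) s := (hx s).hasDerivAt
    have hys : HasDerivAt y (deriv y s) s := (hy s).hasDerivAt
    have hts : HasDerivAt t (deriv t s) s := (ht s).hasDerivAt
    have hcurve : HasDerivAt (fun s => (x s, y s)) ((deriv x s, deriv y s)) s :=
      HasDerivAt.prodMk hxs hys
    have hcomp : HasDerivAt (fun s => H (x s, y s))
        (Hx * deriv x s + Hy * deriv y s) s := by
      have := hfd.comp_hasDerivAt s hcurve
      have heval : fderiv ℝ H p (deriv x s, deriv y s)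
          = Hx * deriv x s + Hy * deriv y s := by
        have : (deriv x s, deriv y s)
            = deriv x s • ((1 : ℝ), (0 : ℝ)) + deriv y s • ((0 : ℝ), (1 : ℝ)) := by
          simp [Prod.ext_iff]
        rw [this, map_add, map_smul, map_smul, ← hHx', ← hHy']
        simp [smul_eq_mul, mul_comm]
      rw [heval] at this
      exact this
    have hprod := HasDerivAt.mul hts hcomp
    have hzero : deriv t s * H (x s, y s)
        + t s * (Hx * deriv x s + Hy * deriv y s) = 0 := by
      rw [ht' s, hx' s, hy' s, ← hHx, ← hHy]
      ring
    exact HasDerivAt.congr_deriv hprod hzero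
  have hconst := (fun s => (key s).deriv)
  have : ∀ s, deriv (fun s => t s * H (x s, y s)) s = 0 := hconst
  have := is_const_of_deriv_eq_zero (f := fun s => t s * H (x s, y s))
    (fun s => ((key s).differentiableAt)) this s₁ s₂
  simpa using this
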